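/- Let T be a finite tree and M a perfect matching of T. Then for every edge xy ∈ M, the third bi-power T_B^3 has a Hamiltonian path from x to y. Moreover this path can be chosen to cross every edge e ∈ E(T) \ M exactly twice with respect to T. -/

import Mathlib

/-!
Induction over the subtrees `S` of `T` that are unions of matching edges, for Hamiltonian paths
`x → y` of `S` in `T_B^3` whose penultimate vertex is within distance 2 of `x` and whose second
vertex is within distance 2 of `y`. If `S = {x, y}` the path is the edge `xy`. Otherwise, up to
reversal, `x` has a neighbour `a ≠ y` in `S`, with partner `a'`. Deleting `xa` splits `S` into the
side of `x` and the side of `a`, carrying paths `P : x → y` and `Q : a → a'`; replace the last dart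
`zy` of `P` by `z → Q → y`. Here `a'y` spans a path of length 3 of `T`, and `za` is a dart of
`T_B^3` since `dist x z ≤ 2` and `dist z y` is odd. The edge `xa` is crossed exactly by the two new
darts, and every other edge of `T[S]` is crossed exactly as in `P` or as in `Q`.
-/

/-- The `t`-th bi-power of a graph `G`: two vertices are adjacent iff their
distance in `G` is odd and at most `t`. -/
def SimpleGraph.biPower {V : Type*} (G : SimpleGraph V) (t : ℕ) : SimpleGraph V where
  Adj x y := Odd (G.dist x y) ∧ G.dist x y ≤ t
  symm := ⟨fun x y h => by show Odd (G.dist y x) ∧ G.dist y x ≤ t; rwa [SimpleGraph.dist_comm]⟩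
  loopless := ⟨fun x h => by simp [SimpleGraph.dist_self, Nat.odd_iff] at h⟩

namespace SimpleGraph

variable {V : Type*} {G : SimpleGraph V} {S : Set V} {u v w x y z a a' : V}

theorem IsBipartite.odd_length_iff_odd_length (hG : G.IsBipartite) (p q : G.Walk u v) :
    Odd p.length ↔ Odd q.length := by
  obtain ⟨c⟩ := hG
  let c' : G.Coloring Bool := recolorOfEquiv G finTwoEquiv c
  rw [c'.odd_length_iff_not_congr p, c'.odd_length_iff_not_congr q]

theorem IsBipartite.odd_dist_iff (hG : G.IsBipartite) (p : G.Walk u v) :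
    Odd (G.dist u v) ↔ Odd p.length := by
  obtain ⟨q, hq⟩ := p.reachable.exists_walk_length_eq_dist
  rw [← hq, hG.odd_length_iff_odd_length q p]

theorem biPower_adj_of_adj {t : ℕ} (h : G.Adj u v) (ht : 1 ≤ t) : (G.biPower t).Adj u v := by
  have h1 : G.dist u v = 1 := dist_eq_one_iff_adj.2 h
  exact ⟨h1 ▸ odd_one, h1 ▸ ht⟩

theorem IsBipartite.biPower_adj_of_walk (hG : G.IsBipartite) {t : ℕ} (p : G.Walk u v)
    (hodd : Odd p.length) (hle : p.length ≤ t) : (G.biPower t).Adj u v :=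
  ⟨(hG.odd_dist_iff p).2 hodd, (dist_le p).trans hle⟩

theorem IsBipartite.biPower_three_adj_of_dist_le_two (hG : G.IsBipartite) (hzx : G.Reachable z x)
    (hzx2 : G.dist z x ≤ 2) (hzy : Odd (G.dist z y)) (hxy : G.Adj x y) (hxa : G.Adj x a) :
    (G.biPower 3).Adj z a := by
  obtain ⟨r, hr⟩ := hzx.exists_walk_length_eq_dist
  have heven : Even r.length := by
    simpa [Nat.odd_add_one] using (hG.odd_dist_iff (r.concat hxy)).1 hzy
  refine hG.biPower_adj_of_walk (r.concat hxa) ?_ ?_ <;> rw [Walk.length_concat]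
  · exact heven.add_one
  · omega

theorem IsAcyclic.exists_walk_support_subset {H : SimpleGraph V} (hG : G.IsAcyclic) (hHG : H ≤ G)
    (hr : H.Reachable u v) (p : G.Walk u v) : ∃ q : H.Walk u v, q.support ⊆ p.support := by
  classical
  obtain ⟨q⟩ := hr
  refine ⟨q.bypass, ?_⟩
  have hq : q.bypass.mapLe hHG = p.bypass := congrArg Subtype.val <|
    (hG.subsingleton_path u v).elim ⟨_, q.bypass_isPath.mapLe hHG⟩ ⟨_, p.bypass_isPath⟩
  rw [← Walk.support_mapLe_eq_support hHG, hq]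
  exact p.support_bypass_subset_support

theorem preconnected_induce_iff_exists_walk :
    (G.induce S).Preconnected ↔ ∀ c ∈ S, ∀ d ∈ S, ∃ p : G.Walk c d, ∀ w ∈ p.support, w ∈ S := by
  refine ⟨fun hS c hc d hd => ?_, fun hS c d => ?_⟩
  · obtain ⟨p⟩ := hS ⟨c, hc⟩ ⟨d, hd⟩
    refine ⟨p.map (Embedding.induce S).toHom, fun w hw => ?_⟩
    obtain ⟨w', -, rfl⟩ := List.mem_map.1 (Walk.support_map _ _ ▸ hw)
    exact w'.2
  · obtain ⟨p, hp⟩ := hS c c.2 d d.2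
    exact ⟨p.induce S hp⟩

theorem Preconnected.reachable_deleteEdges_of_notMem (hS : (G.induce S).Preconnected)
    (huv : ¬ (u ∈ S ∧ v ∈ S)) {c d : V} (hc : c ∈ S) (hd : d ∈ S) :
    (G.deleteEdges {s(u, v)}).Reachable c d := by
  obtain ⟨p, hp⟩ := preconnected_induce_iff_exists_walk.1 hS c hc d hd
  exact reachable_deleteEdges_iff_exists_walk.2 ⟨p, fun he =>
    huv ⟨hp _ (p.fst_mem_support_of_mem_edges he), hp _ (p.snd_mem_support_of_mem_edges he)⟩⟩

theorem Connected.reachable_deleteEdges_or (hG : G.Connected) (x a w : V) :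
    (G.deleteEdges {s(x, a)}).Reachable x w ∨ (G.deleteEdges {s(x, a)}).Reachable a w := by
  set R := {w' | (G.deleteEdges {s(x, a)}).Reachable x w' ∨
    (G.deleteEdges {s(x, a)}).Reachable a w'}
  by_contra hw
  obtain ⟨p⟩ := hG x w
  obtain ⟨⟨⟨c, d⟩, hcd⟩, -, hc, hd⟩ := p.exists_boundary_dart R (Or.inl .rfl) hw
  by_cases he : s(c, d) = s(x, a)
  · obtain ⟨-, rfl⟩ | ⟨-, rfl⟩ := Sym2.eq_iff.1 he
    exacts [hd (Or.inr .rfl), hd (Or.inl .rfl)]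
  · have hcd' : (G.deleteEdges {s(x, a)}).Adj c d := by simp [hcd, he]
    exact hd (hc.imp (·.trans hcd'.reachable) (·.trans hcd'.reachable))

theorem IsAcyclic.not_reachable_deleteEdges (hG : G.IsAcyclic) (hxa : G.Adj x a) :
    ¬ (G.deleteEdges {s(x, a)}).Reachable x a :=
  isBridge_iff.1 (isAcyclic_iff_forall_adj_isBridge.1 hG hxa)

def side (G : SimpleGraph V) (x a : V) (S : Set V) : Set V :=
  {w ∈ S | (G.deleteEdges {s(x, a)}).Reachable x w}

theorem mem_side_of_adj (hu : u ∈ G.side x a S) (hv : v ∈ S) (huv : G.Adj u v)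
    (he : s(u, v) ≠ s(x, a)) : v ∈ G.side x a S :=
  ⟨hv, hu.2.trans (Adj.reachable (by simp [huv, he]))⟩

theorem Connected.mem_side_or_mem_side (hG : G.Connected) (hw : w ∈ S) :
    w ∈ G.side x a S ∨ w ∈ G.side a x S := by
  rw [side, side, Sym2.eq_swap (a := a)]
  exact (hG.reachable_deleteEdges_or x a w).imp (⟨hw, ·⟩) (⟨hw, ·⟩)

theorem IsAcyclic.not_reachable_of_mem_side (hG : G.IsAcyclic) (hxa : G.Adj x a) {S' : Set V}
    {c d : V} (hc : c ∈ G.side x a S) (hd : d ∈ G.side a x S') :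
    ¬ (G.deleteEdges {s(x, a)}).Reachable c d := fun hcd => by
  rw [side, Sym2.eq_swap] at hd
  exact hG.not_reachable_deleteEdges hxa (hc.2.trans (hcd.trans hd.2.symm))

theorem IsAcyclic.disjoint_side (hG : G.IsAcyclic) (hxa : G.Adj x a) :
    Disjoint (G.side x a S) (G.side a x S) :=
  Set.disjoint_left.2 fun _ hx ha => hG.not_reachable_of_mem_side hxa hx ha .rfl

theorem IsAcyclic.side_ssubset (hG : G.IsAcyclic) (hxa : G.Adj x a) (ha : a ∈ S) :
    G.side x a S ⊂ S :=
  (Set.ssubset_iff_of_subset (Set.sep_subset _ _)).2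
    ⟨a, ha, fun h => hG.not_reachable_deleteEdges hxa h.2⟩

theorem IsAcyclic.preconnected_induce_side (hG : G.IsAcyclic) (hS : (G.induce S).Preconnected) :
    (G.induce (G.side x a S)).Preconnected := by
  classical
  refine preconnected_induce_iff_exists_walk.2 fun c hc d hd => ?_
  obtain ⟨p, hp⟩ := preconnected_induce_iff_exists_walk.1 hS c hc.1 d hd.1
  obtain ⟨q, hq⟩ := hG.exists_walk_support_subset (deleteEdges_le _) (hc.2.symm.trans hd.2) p
  refine ⟨q.mapLe (deleteEdges_le _), fun w hw => ?_⟩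
  rw [Walk.support_mapLe_eq_support] at hw
  exact ⟨hp w (hq hw), hc.2.trans ⟨q.takeUntil w hw⟩⟩

theorem Subgraph.sym2_ne_of_adj_of_not_adj {M : G.Subgraph} {c d : V} (hcd : M.Adj c d)
    (huv : ¬ M.Adj u v) : s(c, d) ≠ s(u, v) :=
  fun h => huv ((M.adj_congr_of_sym2 h).1 hcd)

def Subgraph.AdjClosed (M : G.Subgraph) (S : Set V) : Prop :=
  ∀ ⦃v w⦄, M.Adj v w → v ∈ S → w ∈ S

theorem Subgraph.AdjClosed.side {M : G.Subgraph} (hS : M.AdjClosed S) (hxa : ¬ M.Adj x a) :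
    M.AdjClosed (G.side x a S) := fun _ _ hvw hv =>
  mem_side_of_adj hv (hS hvw hv.1) (M.adj_sub hvw) (Subgraph.sym2_ne_of_adj_of_not_adj hvw hxa)

namespace Walk

open Classical

variable {H : SimpleGraph V} (G) (e : Sym2 V)

noncomputable def crossCount (p : H.Walk u v) : ℕ :=
  (p.darts.filter fun d => ¬ (G.deleteEdges {e}).Reachable d.fst d.snd).length

@[simp]
theorem crossCount_nil : (nil : H.Walk u u).crossCount G e = 0 := rfl

@[simp]
theorem crossCount_cons (h : H.Adj u v) (p : H.Walk v w) :
    (cons h p).crossCount G e =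
      (if (G.deleteEdges {e}).Reachable u v then 0 else 1) + p.crossCount G e := by
  by_cases hr : (G.deleteEdges {e}).Reachable u v <;> simp [crossCount, hr, add_comm]

@[simp]
theorem crossCount_append (p : H.Walk u v) (q : H.Walk v w) :
    (p.append q).crossCount G e = p.crossCount G e + q.crossCount G e := by
  simp [crossCount, List.filter_append]

@[simp]
theorem crossCount_concat (p : H.Walk u v) (h : H.Adj v w) :
    (p.concat h).crossCount G e =
      p.crossCount G e + (if (G.deleteEdges {e}).Reachable v w then 0 else 1) := by
  simp [concat_eq_append]

@[simp]
theorem crossCount_reverse (p : H.Walk u v) : p.reverse.crossCount G e = p.crossCount G e := by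
  induction p with
  | nil => rfl
  | cons h p ih => simp [ih, add_comm, reachable_comm]

theorem crossCount_eq_zero {p : H.Walk u v} (r : V)
    (hp : ∀ w ∈ p.support, (G.deleteEdges {e}).Reachable r w) : p.crossCount G e = 0 := by
  simp only [crossCount, List.length_eq_zero_iff, List.filter_eq_nil_iff, decide_eq_true_eq,
    not_not]
  exact fun d hd => (hp _ (p.dart_fst_mem_support_of_mem_darts hd)).symm.trans
    (hp _ (p.dart_snd_mem_support_of_mem_darts hd))

theorem crossCount_eq_crossCount_dropLast_add {p : H.Walk u v} (hp : ¬ p.Nil) :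
    p.crossCount G e = p.dropLast.crossCount G e +
      (if (G.deleteEdges {e}).Reachable p.penultimate v then 0 else 1) := by
  conv_lhs => rw [← p.concat_dropLast (p.adj_penultimate hp)]
  exact crossCount_concat ..

def insertBeforeLast (p : H.Walk u v) (q : H.Walk a a') (h : H.Adj p.penultimate a)
    (h' : H.Adj a' v) : H.Walk u v :=
  p.dropLast.append (cons h (q.concat h'))

variable {G e} {p : H.Walk u v} (q : H.Walk a a') (h : H.Adj p.penultimate a) (h' : H.Adj a' v)

theorem support_insertBeforeLast_perm (hp : ¬ p.Nil) :
    (p.insertBeforeLast q h h').support.Perm (p.support ++ q.support) := by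
  rw [insertBeforeLast, support_append, support_cons, List.tail_cons, support_concat,
    ← support_dropLast_concat hp, List.append_assoc]
  exact List.perm_append_comm.append_left _

theorem penultimate_insertBeforeLast : (p.insertBeforeLast q h h').penultimate = a' := by
  rw [insertBeforeLast, ← concat_cons, append_concat, penultimate_concat]

theorem snd_insertBeforeLast :
    (p.insertBeforeLast q h h').snd = p.snd ∨ (p.insertBeforeLast q h h').snd = a := by
  rw [insertBeforeLast, snd, getVert_append', length_dropLast]
  rcases Nat.lt_or_ge 1 p.length with hp | hp
  · exact .inl <| by rw [if_pos (by omega), getVert_dropLast hp]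
  · exact .inr <| by rw [if_neg (by omega), Nat.sub_eq_zero_of_le hp]; simp

theorem crossCount_insertBeforeLast :
    (p.insertBeforeLast q h h').crossCount G e = p.dropLast.crossCount G e +
      (if (G.deleteEdges {e}).Reachable p.penultimate a then 0 else 1) + q.crossCount G e +
      (if (G.deleteEdges {e}).Reachable a' v then 0 else 1) := by
  simp [insertBeforeLast]
  ring

theorem crossCount_insertBeforeLast_of_reachable (hp : ¬ p.Nil)
    (ha : (G.deleteEdges {e}).Reachable a v) (ha' : (G.deleteEdges {e}).Reachable a' v) :
    (p.insertBeforeLast q h h').crossCount G e = p.crossCount G e + q.crossCount G e := by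
  have hza : (G.deleteEdges {e}).Reachable p.penultimate a ↔
      (G.deleteEdges {e}).Reachable p.penultimate v := ⟨(·.trans ha), (·.trans ha.symm)⟩
  rw [crossCount_insertBeforeLast, crossCount_eq_crossCount_dropLast_add G e hp]
  simp only [hza, ha', if_true]
  ring

end Walk

variable {T : SimpleGraph V} {M : T.Subgraph}

structure IsTwiceCrossingPath (M : T.Subgraph) (S : Set V) {x y : V}
    (p : (T.biPower 3).Walk x y) : Prop where
  isPath : p.IsPath
  mem_support_iff : ∀ w, w ∈ p.support ↔ w ∈ S
  crossCount_eq_two : ∀ ⦃u v⦄, u ∈ S → v ∈ S → T.Adj u v → ¬ M.Adj u v →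
    p.crossCount T s(u, v) = 2
  dist_penultimate_le : T.dist x p.penultimate ≤ 2
  dist_snd_le : T.dist y p.snd ≤ 2

theorem isTwiceCrossingPath_singleton (hxy : M.Adj x y) (hS : S ⊆ {x, y}) (hx : x ∈ S)
    (hy : y ∈ S) :
    IsTwiceCrossingPath M S (.cons (biPower_adj_of_adj (M.adj_sub hxy) (by norm_num)) .nil) where
  isPath := by simp [(M.adj_sub hxy).ne]
  mem_support_iff w := by
    simp only [Walk.support_cons, Walk.support_nil, List.mem_cons, List.not_mem_nil, or_false]
    exact ⟨by rintro (rfl | rfl) <;> assumption, fun hw => hS hw⟩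
  crossCount_eq_two u v hu hv huv hM := by
    exfalso
    rcases hS hu with rfl | rfl <;> rcases hS hv with rfl | rfl
    exacts [huv.ne rfl, hM hxy, hM hxy.symm, huv.ne rfl]
  dist_penultimate_le := by simp
  dist_snd_le := by simp

namespace IsTwiceCrossingPath

variable {p : (T.biPower 3).Walk x y}

theorem reverse (hp : IsTwiceCrossingPath M S p) : IsTwiceCrossingPath M S p.reverse where
  isPath := hp.isPath.reverse
  mem_support_iff w := by rw [Walk.support_reverse, List.mem_reverse, hp.mem_support_iff]
  crossCount_eq_two u v hu hv huv hM := by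
    rw [Walk.crossCount_reverse, hp.crossCount_eq_two hu hv huv hM]
  dist_penultimate_le := by rw [Walk.penultimate_reverse]; exact hp.dist_snd_le
  dist_snd_le := by rw [Walk.snd_reverse]; exact hp.dist_penultimate_le

open Classical in
theorem crossCount_eq (hp : IsTwiceCrossingPath M S p) (hS : (T.induce S).Preconnected)
    (huv : T.Adj u v) (hM : ¬ M.Adj u v) :
    p.crossCount T s(u, v) = if u ∈ S ∧ v ∈ S then 2 else 0 := by
  split_ifs with h
  · exact hp.crossCount_eq_two h.1 h.2 huv hM
  · have hx : x ∈ S := (hp.mem_support_iff x).1 p.start_mem_support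
    exact Walk.crossCount_eq_zero _ _ x fun w hw =>
      hS.reachable_deleteEdges_of_notMem h hx ((hp.mem_support_iff w).1 hw)

variable {P : (T.biPower 3).Walk x y} {Q : (T.biPower 3).Walk a a'}

theorem crossCount_insertBeforeLast_self (hT : T.IsAcyclic) (hxa : T.Adj x a)
    (hP : IsTwiceCrossingPath M (T.side x a S) P) (hQ : IsTwiceCrossingPath M (T.side a x S) Q)
    (hPnil : ¬ P.Nil) (hza : (T.biPower 3).Adj P.penultimate a) (ha'y : (T.biPower 3).Adj a' y) :
    (P.insertBeforeLast Q hza ha'y).crossCount T s(x, a) = 2 := by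
  have hP0 : P.crossCount T s(x, a) = 0 :=
    Walk.crossCount_eq_zero _ _ x fun w hw => ((hP.mem_support_iff w).1 hw).2
  have hQ0 : Q.crossCount T s(x, a) = 0 := Walk.crossCount_eq_zero _ _ a fun w hw => by
    simpa [side, Sym2.eq_swap] using ((hQ.mem_support_iff w).1 hw).2
  have hz := (hP.mem_support_iff _).1 (P.getVert_mem_support (P.length - 1))
  have hy := (hP.mem_support_iff y).1 P.end_mem_support
  have ha := (hQ.mem_support_iff a).1 Q.start_mem_support
  have ha' := (hQ.mem_support_iff a').1 Q.end_mem_support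
  have hPc := P.crossCount_eq_crossCount_dropLast_add T s(x, a) hPnil
  rw [Walk.crossCount_insertBeforeLast, if_neg (hT.not_reachable_of_mem_side hxa hz ha),
    if_neg fun h => hT.not_reachable_of_mem_side hxa hy ha' h.symm]
  omega

theorem crossCount_insertBeforeLast (hT : T.IsTree) (hS : (T.induce S).Preconnected)
    (hxy : M.Adj x y) (hxa : T.Adj x a) (haa' : M.Adj a a')
    (hP : IsTwiceCrossingPath M (T.side x a S) P) (hQ : IsTwiceCrossingPath M (T.side a x S) Q)
    (hza : (T.biPower 3).Adj P.penultimate a) (ha'y : (T.biPower 3).Adj a' y)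
    (hu : u ∈ S) (hv : v ∈ S) (huv : T.Adj u v) (hMuv : ¬ M.Adj u v) :
    (P.insertBeforeLast Q hza ha'y).crossCount T s(u, v) = 2 := by
  have hPnil : ¬ P.Nil := Walk.not_nil_of_ne (M.adj_sub hxy).ne
  by_cases he : s(u, v) = s(x, a)
  · rw [he]
    exact crossCount_insertBeforeLast_self hT.isAcyclic hxa hP hQ hPnil hza ha'y
  have hreach : ∀ {c d}, T.Adj c d → s(c, d) ≠ s(u, v) →
      (T.deleteEdges {s(u, v)}).Reachable c d := fun h h' => Adj.reachable (by simp [h, h'])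
  have hay := (hreach hxa.symm fun h => he (h.symm.trans Sym2.eq_swap)).trans
    (hreach (M.adj_sub hxy) (Subgraph.sym2_ne_of_adj_of_not_adj hxy hMuv))
  have ha'y := (hreach (M.adj_sub haa').symm
    (Subgraph.sym2_ne_of_adj_of_not_adj haa'.symm hMuv)).trans hay
  rw [Walk.crossCount_insertBeforeLast_of_reachable Q hza _ hPnil hay ha'y,
    hP.crossCount_eq (hT.isAcyclic.preconnected_induce_side hS) huv hMuv,
    hQ.crossCount_eq (hT.isAcyclic.preconnected_induce_side hS) huv hMuv]
  have hdisj := Set.disjoint_left.1 (hT.isAcyclic.disjoint_side (S := S) hxa)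
  rcases hT.connected.mem_side_or_mem_side (x := x) (a := a) hu with hu' | hu'
  · have hv' := mem_side_of_adj hu' hv huv he
    rw [if_pos ⟨hu', hv'⟩, if_neg fun h => hdisj hu' h.1]
  · have hv' := mem_side_of_adj hu' hv huv fun h => he (h.trans Sym2.eq_swap)
    rw [if_neg fun h => hdisj h.1 hu', if_pos ⟨hu', hv'⟩]

theorem insertBeforeLast (hT : T.IsTree) (hS : (T.induce S).Preconnected)
    (hxy : M.Adj x y) (hxa : T.Adj x a) (haa' : M.Adj a a')
    (hP : IsTwiceCrossingPath M (T.side x a S) P) (hQ : IsTwiceCrossingPath M (T.side a x S) Q) :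
    ∃ W : (T.biPower 3).Walk x y, IsTwiceCrossingPath M S W := by
  have hxyT := M.adj_sub hxy
  have hPnil : ¬ P.Nil := Walk.not_nil_of_ne hxyT.ne
  have hza : (T.biPower 3).Adj P.penultimate a :=
    hT.isBipartite.biPower_three_adj_of_dist_le_two (hT.connected _ _)
      (dist_comm (G := T) ▸ hP.dist_penultimate_le) (P.adj_penultimate hPnil).1 hxyT hxa
  have ha'y : (T.biPower 3).Adj a' y := hT.isBipartite.biPower_adj_of_walk
    (.cons (M.adj_sub haa').symm (.cons hxa.symm (.cons hxyT .nil))) ⟨1, rfl⟩ le_rfl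
  have hperm := Walk.support_insertBeforeLast_perm Q hza ha'y hPnil
  refine ⟨P.insertBeforeLast Q hza ha'y, ⟨?_, fun w => ?_, fun u v hu hv huv hM =>
    hP.crossCount_insertBeforeLast hT hS hxy hxa haa' hQ hza ha'y hu hv huv hM, ?_, ?_⟩⟩
  · rw [Walk.isPath_def, hperm.nodup_iff, List.nodup_append]
    refine ⟨hP.isPath.support_nodup, hQ.isPath.support_nodup, fun c hc d hd hcd => ?_⟩
    rw [hP.mem_support_iff] at hc
    rw [hQ.mem_support_iff, ← hcd] at hd
    exact Set.disjoint_left.1 (hT.isAcyclic.disjoint_side hxa) hc hd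
  · rw [hperm.mem_iff, List.mem_append, hP.mem_support_iff, hQ.mem_support_iff]
    exact ⟨fun h => h.elim (·.1) (·.1), hT.connected.mem_side_or_mem_side⟩
  · rw [Walk.penultimate_insertBeforeLast]
    exact dist_le (.cons hxa (.cons (M.adj_sub haa') .nil))
  · rcases Walk.snd_insertBeforeLast Q hza ha'y with h | h <;> rw [h]
    exacts [hP.dist_snd_le, dist_le (.cons hxyT.symm (.cons hxa .nil))]

end IsTwiceCrossingPath

theorem exists_isTwiceCrossingPath_of_adj (hT : T.IsTree) (hM : M.IsPerfectMatching)
    (hS : (T.induce S).Preconnected) (hMS : M.AdjClosed S)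
    (ih : ∀ S' ⊂ S, ∀ {x y : V}, (T.induce S').Preconnected → M.AdjClosed S' → M.Adj x y →
      x ∈ S' → y ∈ S' → ∃ p : (T.biPower 3).Walk x y, IsTwiceCrossingPath M S' p)
    (hxy : M.Adj x y) (hx : x ∈ S) (ha : a ∈ S) (hxa : T.Adj x a) (hay : a ≠ y) :
    ∃ p : (T.biPower 3).Walk x y, IsTwiceCrossingPath M S p := by
  obtain ⟨a', haa', -⟩ := Subgraph.isPerfectMatching_iff.1 hM a
  have hMxa : ¬ M.Adj x a := hM.1.not_adj_left_of_ne hay.symm hxy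
  have hMax : ¬ M.Adj a x := fun h => hMxa h.symm
  obtain ⟨P, hP⟩ := ih _ (hT.isAcyclic.side_ssubset hxa ha)
    (hT.isAcyclic.preconnected_induce_side hS) (hMS.side hMxa) hxy ⟨hx, .rfl⟩
    (mem_side_of_adj ⟨hx, .rfl⟩ (hMS hxy hx) (M.adj_sub hxy)
      (Subgraph.sym2_ne_of_adj_of_not_adj hxy hMxa))
  obtain ⟨Q, hQ⟩ := ih _ (hT.isAcyclic.side_ssubset hxa.symm hx)
    (hT.isAcyclic.preconnected_induce_side hS) (hMS.side hMax) haa' ⟨ha, .rfl⟩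
    (mem_side_of_adj ⟨ha, .rfl⟩ (hMS haa' ha) (M.adj_sub haa')
      (Subgraph.sym2_ne_of_adj_of_not_adj haa' hMax))
  exact hP.insertBeforeLast hT hS hxy hxa haa' hQ

theorem exists_isTwiceCrossingPath [Finite V] (hT : T.IsTree) (hM : M.IsPerfectMatching)
    (S : Set V) (hS : (T.induce S).Preconnected) (hMS : M.AdjClosed S) (hxy : M.Adj x y)
    (hx : x ∈ S) (hy : y ∈ S) : ∃ p : (T.biPower 3).Walk x y, IsTwiceCrossingPath M S p := by
  induction S using WellFoundedLT.induction generalizing x y with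
  | _ S ih =>
    by_cases hxyS : S ⊆ {x, y}
    · exact ⟨_, isTwiceCrossingPath_singleton hxy hxyS hx hy⟩
    obtain ⟨v, hvS, hv⟩ := Set.not_subset.1 hxyS
    obtain ⟨p, hp⟩ := preconnected_induce_iff_exists_walk.1 hS x hx v hvS
    obtain ⟨⟨⟨c, a⟩, hca⟩, hd, hc, ha⟩ := p.exists_boundary_dart {x, y} (by simp) hv
    have haS : a ∈ S := hp a (p.dart_snd_mem_support_of_mem_darts hd)
    simp only [Set.mem_insert_iff, Set.mem_singleton_iff, not_or] at hc ha
    rcases hc with rfl | rfl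
    · exact exists_isTwiceCrossingPath_of_adj hT hM hS hMS ih hxy hx haS hca ha.2
    · obtain ⟨q, hq⟩ :=
        exists_isTwiceCrossingPath_of_adj hT hM hS hMS ih hxy.symm hy haS hca ha.1
      exact ⟨q.reverse, hq.reverse⟩

end SimpleGraph

open Classical in
/-- Let `T` be a finite tree and `M` a perfect matching of `T`.  Then for
every edge `xy ∈ M`, the third bi-power `T_B^3` has a Hamiltonian path from
`x` to `y` that crosses every edge `uv ∈ E(T) \\ M` exactly twice with respect
to `T` (i.e. it uses exactly two edges joining the two components of
`T - uv`). -/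
theorem tree_biPower_three_hamiltonian_path_crossing {V : Type*} [Fintype V] [DecidableEq V]
    (T : SimpleGraph V) (hT : T.IsTree) (M : T.Subgraph) (hM : M.IsPerfectMatching)
    (x y : V) (hxy : M.Adj x y) :
    ∃ p : (T.biPower 3).Walk x y, p.IsHamiltonian ∧
      ∀ u v : V, T.Adj u v → ¬ M.Adj u v →
        (p.darts.filter (fun d => decide (¬ (T.deleteEdges {s(u, v)}).Reachable d.toProd.1 d.toProd.2))).length = 2 := by
  obtain ⟨p, hp⟩ := SimpleGraph.exists_isTwiceCrossingPath hT hM Set.univ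
    ((SimpleGraph.induceUnivIso T).preconnected_iff.2 hT.connected.preconnected)
    (fun _ _ _ _ => trivial) hxy trivial trivial
  refine ⟨p, hp.isPath.isHamiltonian_iff.2 fun w => (hp.mem_support_iff w).2 trivial,
    fun u v huv hMuv => ?_⟩
  rw [← hp.crossCount_eq_two trivial trivial huv hMuv, SimpleGraph.Walk.crossCount]
  -- the two filters differ only in their `Decidable` instances
  congr!
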